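/- Let μ be a Lévy measure with μ(ℝ) = ∞ satisfying condition A with constant β > 1. Define ρ_t = inf{ξ > 0 : Re ψ(ξ) ≥ 1/t}, ρ_t^U = inf{ξ > 0 : ψ^U(ξ) ≥ 1/t}, ρ_t^L = inf{ξ > 0 : ψ^L(ξ) ≥ 1/t}. Then for every constant c ∈ (0,∞) there exist positive constants c₁, c₂ such that c₁ ρ_t ≤ ρ_{ct} ≤ c₂ ρ_t, c₁ ρ_t ≤ ρ_t^U ≤ c₂ ρ_t, and c₁ ρ_t ≤ ρ_t^L ≤ c₂ ρ_t for all t ∈ (0,1]. -/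

import Mathlib

open MeasureTheory Real Set

/-- A Lévy measure on `ℝ`: a Borel measure with `∫ min(1, u²) μ(du) < ∞`. -/
def IsLevyMeasure (μ : Measure ℝ) : Prop :=
  ∫⁻ u, ENNReal.ofReal (min 1 (u ^ 2)) ∂μ < ⊤

/-- `ψ^L(ξ) = ∫_{|ξu|<1} (ξu)² μ(du)`. -/
noncomputable def psiL (μ : Measure ℝ) (ξ : ℝ) : ℝ :=
  (∫⁻ u in {u : ℝ | |ξ * u| < 1}, ENNReal.ofReal ((ξ * u) ^ 2) ∂μ).toReal

/-- `ψ^U(ξ) = ∫ min((ξu)², 1) μ(du)`. -/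
noncomputable def psiU (μ : Measure ℝ) (ξ : ℝ) : ℝ :=
  (∫⁻ u, ENNReal.ofReal (min ((ξ * u) ^ 2) 1) ∂μ).toReal

/-- `Re ψ(ξ) = ∫ (1 - cos(ξu)) μ(du)`. -/
noncomputable def rePsi (μ : Measure ℝ) (ξ : ℝ) : ℝ :=
  (∫⁻ u, ENNReal.ofReal (1 - Real.cos (ξ * u)) ∂μ).toReal

/-- `ρ_t = inf{ξ > 0 : Re ψ(ξ) ≥ 1/t}`. -/
noncomputable def rho (μ : Measure ℝ) (t : ℝ) : ℝ :=
  sInf {ξ : ℝ | 0 < ξ ∧ 1 / t ≤ rePsi μ ξ}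

/-- `ρ_t^U = inf{ξ > 0 : ψ^U(ξ) ≥ 1/t}`. -/
noncomputable def rhoU (μ : Measure ℝ) (t : ℝ) : ℝ :=
  sInf {ξ : ℝ | 0 < ξ ∧ 1 / t ≤ psiU μ ξ}

/-- `ρ_t^L = inf{ξ > 0 : ψ^L(ξ) ≥ 1/t}`. -/
noncomputable def rhoL (μ : Measure ℝ) (t : ℝ) : ℝ :=
  sInf {ξ : ℝ | 0 < ξ ∧ 1 / t ≤ psiL μ ξ}

/-!
Condition A and the elementary bounds `ψ^L ≤ ψ^U`, `Re ψ ≤ 2ψ^U`, `ψ^L ≤ 3 Re ψ` make `Re ψ`, `ψ^U`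
and `ψ^L` comparable to `ψ^U` with the constant `3β`. The pointwise inequality
`min(x², 1) + (3/4)(2x)² 1_{|2x|<1} ≤ min((2x)², 1)` together with condition A makes `ψ^U` reverse
doubling: `ψ^U(2ξ) ≥ γ ψ^U(ξ)` with `γ = 4β/(4β-3) > 1`. So if `f(ξ) ≥ s`, then
`g(2^k ξ) ≥ γ^k s / (3β)²` for any two of the three functions `f`, `g`; taking `γ^k` large enough
compares the infima of their level sets up to the factor `2^k`.
-/

open scoped ENNReal

section LIntegralOfReal

variable {α : Type*} [MeasurableSpace α] {ν : Measure α}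

lemma lintegral_ofReal_le_mul {f g : α → ℝ} {C : ℝ} (hC : 0 ≤ C) (hfg : ∀ x, f x ≤ C * g x) :
    ∫⁻ x, ENNReal.ofReal (f x) ∂ν ≤ ENNReal.ofReal C * ∫⁻ x, ENNReal.ofReal (g x) ∂ν := calc
  _ ≤ ∫⁻ x, ENNReal.ofReal C * ENNReal.ofReal (g x) ∂ν := lintegral_mono fun x =>
      (ENNReal.ofReal_le_ofReal (hfg x)).trans_eq (ENNReal.ofReal_mul hC)
  _ = _ := lintegral_const_mul' _ _ ENNReal.ofReal_ne_top

lemma toReal_lintegral_ofReal_le_mul {f g : α → ℝ} {C : ℝ} (hC : 0 ≤ C)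
    (hfg : ∀ x, f x ≤ C * g x) (hg : ∫⁻ x, ENNReal.ofReal (g x) ∂ν ≠ ∞) :
    (∫⁻ x, ENNReal.ofReal (f x) ∂ν).toReal ≤ C * (∫⁻ x, ENNReal.ofReal (g x) ∂ν).toReal := by
  have h := ENNReal.toReal_mono (ENNReal.mul_ne_top ENNReal.ofReal_ne_top hg)
    (lintegral_ofReal_le_mul (ν := ν) hC hfg)
  rwa [ENNReal.toReal_mul, ENNReal.toReal_ofReal hC] at h

lemma toReal_lintegral_ofReal_add_mul_le {f g h : α → ℝ} {c : ℝ} (hc : 0 ≤ c)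
    (hf : ∀ x, 0 ≤ f x) (hg : ∀ x, 0 ≤ g x) (hfgh : ∀ x, f x + c * g x ≤ h x)
    (hh : ∫⁻ x, ENNReal.ofReal (h x) ∂ν ≠ ∞) :
    (∫⁻ x, ENNReal.ofReal (f x) ∂ν).toReal + c * (∫⁻ x, ENNReal.ofReal (g x) ∂ν).toReal
      ≤ (∫⁻ x, ENNReal.ofReal (h x) ∂ν).toReal := by
  have hle : ∫⁻ x, ENNReal.ofReal (f x) ∂ν + ENNReal.ofReal c * ∫⁻ x, ENNReal.ofReal (g x) ∂ν
      ≤ ∫⁻ x, ENNReal.ofReal (h x) ∂ν := calc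
    _ = ∫⁻ x, ENNReal.ofReal (f x) ∂ν + ∫⁻ x, ENNReal.ofReal (c * g x) ∂ν := by
      simp_rw [ENNReal.ofReal_mul hc, lintegral_const_mul' _ _ ENNReal.ofReal_ne_top]
    _ ≤ ∫⁻ x, (ENNReal.ofReal (f x) + ENNReal.ofReal (c * g x)) ∂ν := le_lintegral_add _ _
    _ ≤ _ := lintegral_mono fun x => by
      rw [← ENNReal.ofReal_add (hf x) (mul_nonneg hc (hg x))]
      exact ENNReal.ofReal_le_ofReal (hfgh x)
  have hlt := lt_of_le_of_lt hle hh.lt_top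
  have h := ENNReal.toReal_mono hh hle
  rwa [ENNReal.toReal_add (ENNReal.add_lt_top.mp hlt).1.ne (ENNReal.add_lt_top.mp hlt).2.ne,
    ENNReal.toReal_mul, ENNReal.toReal_ofReal hc] at h

end LIntegralOfReal

noncomputable def psiLIntegrand (x : ℝ) : ℝ := if |x| < 1 then x ^ 2 else 0

lemma psiLIntegrand_nonneg (x : ℝ) : 0 ≤ psiLIntegrand x := by
  unfold psiLIntegrand; split_ifs <;> positivity

lemma psiLIntegrand_le_min (x : ℝ) : psiLIntegrand x ≤ min (x ^ 2) 1 := by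
  unfold psiLIntegrand
  split_ifs with hx
  · rw [min_eq_left ((sq_le_one_iff_abs_le_one x).2 hx.le)]
  · positivity

lemma one_sub_cos_le_two_mul_min (x : ℝ) : 1 - cos x ≤ 2 * min (x ^ 2) 1 := by
  rcases le_total (x ^ 2) 1 with h | h
  · rw [min_eq_left h]
    linarith [one_sub_sq_div_two_le_cos (x := x), sq_nonneg x]
  · rw [min_eq_right h]
    linarith [neg_one_le_cos x]

lemma psiLIntegrand_le_three_mul_one_sub_cos (x : ℝ) : psiLIntegrand x ≤ 3 * (1 - cos x) := by
  unfold psiLIntegrand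
  split_ifs with hx
  · -- `cos x ≤ 1 - x²/2 + (5/96) x⁴ ≤ 1 - x²/3` for `|x| ≤ 1`
    have hcos := (abs_le.mp (cos_bound hx.le)).2
    rw [(by decide : Even 4).pow_abs] at hcos
    nlinarith [(sq_le_one_iff_abs_le_one x).2 hx.le, sq_nonneg x]
  · linarith [cos_le_one x]

lemma min_sq_one_add_psiLIntegrand_le (x : ℝ) :
    min (x ^ 2) 1 + 3 / 4 * psiLIntegrand (2 * x) ≤ min ((2 * x) ^ 2) 1 := by
  unfold psiLIntegrand
  split_ifs with hx
  · have h2x := (sq_le_one_iff_abs_le_one _).2 hx.le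
    rw [min_eq_left h2x, min_eq_left (by nlinarith)]
    linarith
  · rw [mul_zero, add_zero]
    exact min_le_min (by nlinarith [sq_nonneg x]) le_rfl

lemma min_mul_sq_one_le (a u : ℝ) : min ((a * u) ^ 2) 1 ≤ max (a ^ 2) 1 * min 1 (u ^ 2) := by
  rcases le_total (u ^ 2) 1 with h | h
  · rw [min_eq_right h]
    calc min ((a * u) ^ 2) 1 ≤ a ^ 2 * u ^ 2 := (min_le_left _ _).trans_eq (mul_pow a u 2)
      _ ≤ max (a ^ 2) 1 * u ^ 2 := by gcongr; exact le_max_left _ _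
  · rw [min_eq_left h, mul_one]
    exact (min_le_right _ _).trans (le_max_right _ _)

noncomputable def quasiInverse (f : ℝ → ℝ) (s : ℝ) : ℝ := sInf {ξ : ℝ | 0 < ξ ∧ s ≤ f ξ}

def ComparableWith (C : ℝ) (f g : ℝ → ℝ) : Prop := ∀ ξ, f ξ ≤ C * g ξ ∧ g ξ ≤ C * f ξ

lemma comparableWith_self {C : ℝ} {f : ℝ → ℝ} (hC : 1 ≤ C) (hf : ∀ ξ, 0 ≤ f ξ) :
    ComparableWith C f f := fun ξ => by
  have := le_mul_of_one_le_left (hf ξ) hC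
  exact ⟨this, this⟩

section QuasiInverse

variable {f f₁ f₂ g : ℝ → ℝ}

lemma quasiInverse_eq_zero_of_not_exists {s : ℝ} (h : ¬∃ ξ, 0 < ξ ∧ s ≤ f ξ) :
    quasiInverse f s = 0 := by
  refine (congrArg sInf ?_).trans Real.sInf_empty
  exact eq_empty_iff_forall_notMem.mpr fun ξ hξ => h ⟨ξ, hξ⟩

lemma quasiInverse_le_mul {s₁ s₂ r : ℝ} (hr : 0 < r)
    (h : ∀ ξ, 0 < ξ → s₁ ≤ f₁ ξ → s₂ ≤ f₂ (r * ξ)) (hne : ∃ ξ, 0 < ξ ∧ s₁ ≤ f₁ ξ) :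
    quasiInverse f₂ s₂ ≤ r * quasiInverse f₁ s₁ := by
  rw [← div_le_iff₀' hr]
  refine le_csInf hne fun ξ ⟨hξ, hξs⟩ => (div_le_iff₀' hr).mpr ?_
  exact csInf_le ⟨0, fun _ hx => hx.1.le⟩ ⟨by positivity, h ξ hξ hξs⟩

lemma pow_mul_le_of_reverse_doubling {γ : ℝ} (hγ : 0 ≤ γ) (hg : ∀ ξ, γ * g ξ ≤ g (2 * ξ))
    (k : ℕ) (ξ : ℝ) : γ ^ k * g ξ ≤ g (2 ^ k * ξ) := by
  induction k with
  | zero => simp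
  | succ k ih => calc
      γ ^ (k + 1) * g ξ = γ * (γ ^ k * g ξ) := by ring
      _ ≤ γ * g (2 ^ k * ξ) := by gcongr
      _ ≤ g (2 ^ (k + 1) * ξ) := by rw [pow_succ', mul_assoc]; exact hg _

lemma exists_le_of_reverse_doubling {γ ξ : ℝ} (hγ : 1 < γ) (hg : ∀ ξ, γ * g ξ ≤ g (2 * ξ))
    (hξ : 0 < g ξ) (s : ℝ) : ∃ k : ℕ, s ≤ g (2 ^ k * ξ) := by
  obtain ⟨k, hk⟩ := pow_unbounded_of_one_lt (s / g ξ) hγ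
  refine ⟨k, le_trans ?_ (pow_mul_le_of_reverse_doubling (by linarith) hg k ξ)⟩
  exact (div_le_iff₀ hξ).mp hk.le

theorem quasiInverse_le_two_pow_mul {γ C K s₁ s₂ : ℝ} {k : ℕ} (hγ : 1 < γ)
    (hg : ∀ ξ, γ * g ξ ≤ g (2 * ξ)) (hC : 0 < C)
    (hf₁ : ComparableWith C f₁ g) (hf₂ : ComparableWith C f₂ g)
    (hs₁ : 0 ≤ s₁) (hs₂ : 0 < s₂) (hs : s₂ ≤ K * s₁) (hk : C ^ 2 * K ≤ γ ^ k) :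
    quasiInverse f₂ s₂ ≤ 2 ^ k * quasiInverse f₁ s₁ := by
  by_cases hne : ∃ ξ, 0 < ξ ∧ s₁ ≤ f₁ ξ
  · refine quasiInverse_le_mul (by positivity) (fun ξ _ hξ => ?_) hne
    have : C ^ 2 * s₂ ≤ C ^ 2 * f₂ (2 ^ k * ξ) := calc
      C ^ 2 * s₂ ≤ C ^ 2 * K * s₁ := by rw [mul_assoc]; gcongr
      _ ≤ γ ^ k * (C * g ξ) := by gcongr; exact hξ.trans (hf₁ ξ).1
      _ = C * (γ ^ k * g ξ) := by ring
      _ ≤ C * (C * f₂ (2 ^ k * ξ)) := mul_le_mul_of_nonneg_left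
        ((pow_mul_le_of_reverse_doubling (by linarith) hg k ξ).trans (hf₂ _).2) hC.le
      _ = C ^ 2 * f₂ (2 ^ k * ξ) := by ring
    exact le_of_mul_le_mul_left this (by positivity)
  · -- then `g` vanishes on `(0, ∞)`, and both quasi-inverses are the junk value `sInf ∅ = 0`
    have hne₂ : ¬∃ ξ, 0 < ξ ∧ s₂ ≤ f₂ ξ := by
      rintro ⟨ξ, hξ, hξs⟩
      have hgξ : 0 < g ξ := pos_of_mul_pos_right (hs₂.trans_le (hξs.trans (hf₂ ξ).1)) hC.le
      obtain ⟨j, hj⟩ := exists_le_of_reverse_doubling hγ hg hgξ (C * s₁)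
      exact hne ⟨2 ^ j * ξ, by positivity, le_of_mul_le_mul_left (hj.trans (hf₁ _).2) hC⟩
    rw [quasiInverse_eq_zero_of_not_exists hne, quasiInverse_eq_zero_of_not_exists hne₂, mul_zero]

end QuasiInverse

section LevyExponents

variable {μ : Measure ℝ}

lemma lintegral_min_sq_one_ne_top (hμ : IsLevyMeasure μ) (ξ : ℝ) :
    ∫⁻ u, ENNReal.ofReal (min ((ξ * u) ^ 2) 1) ∂μ ≠ ∞ :=
  ne_top_of_le_ne_top (ENNReal.mul_ne_top ENNReal.ofReal_ne_top hμ.ne)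
    (lintegral_ofReal_le_mul (le_max_of_le_right zero_le_one) (min_mul_sq_one_le ξ))

lemma lintegral_one_sub_cos_ne_top (hμ : IsLevyMeasure μ) (ξ : ℝ) :
    ∫⁻ u, ENNReal.ofReal (1 - cos (ξ * u)) ∂μ ≠ ∞ :=
  ne_top_of_le_ne_top (ENNReal.mul_ne_top ENNReal.ofReal_ne_top (lintegral_min_sq_one_ne_top hμ ξ))
    (lintegral_ofReal_le_mul zero_le_two fun u => one_sub_cos_le_two_mul_min (ξ * u))

lemma psiL_eq_toReal_lintegral (μ : Measure ℝ) (ξ : ℝ) :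
    psiL μ ξ = (∫⁻ u, ENNReal.ofReal (psiLIntegrand (ξ * u)) ∂μ).toReal := by
  have hS : MeasurableSet {u : ℝ | |ξ * u| < 1} :=
    measurableSet_lt (measurable_const.mul measurable_id).abs measurable_const
  rw [psiL, ← lintegral_indicator hS]
  congr 1
  refine lintegral_congr fun u => ?_
  simp only [indicator, psiLIntegrand, mem_ofPred_eq]
  split_ifs <;> simp

lemma psiL_le_psiU (hμ : IsLevyMeasure μ) (ξ : ℝ) : psiL μ ξ ≤ psiU μ ξ := by
  rw [psiL_eq_toReal_lintegral, ← one_mul (psiU μ ξ)]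
  exact toReal_lintegral_ofReal_le_mul zero_le_one
    (fun u => (psiLIntegrand_le_min (ξ * u)).trans_eq (one_mul _).symm)
    (lintegral_min_sq_one_ne_top hμ ξ)

lemma rePsi_le_two_mul_psiU (hμ : IsLevyMeasure μ) (ξ : ℝ) : rePsi μ ξ ≤ 2 * psiU μ ξ :=
  toReal_lintegral_ofReal_le_mul zero_le_two (fun u => one_sub_cos_le_two_mul_min (ξ * u))
    (lintegral_min_sq_one_ne_top hμ ξ)

lemma psiL_le_three_mul_rePsi (hμ : IsLevyMeasure μ) (ξ : ℝ) : psiL μ ξ ≤ 3 * rePsi μ ξ := by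
  rw [psiL_eq_toReal_lintegral]
  exact toReal_lintegral_ofReal_le_mul zero_le_three
    (fun u => psiLIntegrand_le_three_mul_one_sub_cos (ξ * u)) (lintegral_one_sub_cos_ne_top hμ ξ)

lemma psiU_add_three_div_four_mul_psiL_le (hμ : IsLevyMeasure μ) (ξ : ℝ) :
    psiU μ ξ + 3 / 4 * psiL μ (2 * ξ) ≤ psiU μ (2 * ξ) := by
  rw [psiL_eq_toReal_lintegral]
  simp_rw [psiU, mul_assoc]
  exact toReal_lintegral_ofReal_add_mul_le (by norm_num) (fun _ => by positivity)
    (fun _ => psiLIntegrand_nonneg _) (fun u => min_sq_one_add_psiLIntegrand_le (ξ * u))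
    (by simpa only [mul_assoc] using lintegral_min_sq_one_ne_top hμ (2 * ξ))

-- `ψ^U(2ξ) ≥ ψ^U(ξ) + (3/4) ψ^L(2ξ) ≥ ψ^U(ξ) + 3/(4β) ψ^U(2ξ)`
lemma psiU_reverse_doubling (hμ : IsLevyMeasure μ) {β : ℝ} (hβ : 3 / 4 < β)
    (hA : ∀ ξ : ℝ, psiU μ ξ ≤ β * psiL μ ξ) (ξ : ℝ) :
    4 * β / (4 * β - 3) * psiU μ ξ ≤ psiU μ (2 * ξ) := by
  have hadd := psiU_add_three_div_four_mul_psiL_le hμ ξ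
  have hA2 := hA (2 * ξ)
  rw [div_mul_eq_mul_div, div_le_iff₀ (by linarith)]
  nlinarith

lemma rePsi_comparableWith_psiU (hμ : IsLevyMeasure μ) {β : ℝ} (hβ : 2 ≤ 3 * β)
    (hA : ∀ ξ : ℝ, psiU μ ξ ≤ β * psiL μ ξ) : ComparableWith (3 * β) (rePsi μ) (psiU μ) := by
  intro ξ
  have hU : 0 ≤ psiU μ ξ := ENNReal.toReal_nonneg
  have hL := psiL_le_three_mul_rePsi hμ ξ
  constructor <;> nlinarith [rePsi_le_two_mul_psiU hμ ξ, hA ξ]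

lemma psiL_comparableWith_psiU (hμ : IsLevyMeasure μ) {β : ℝ} (hβ : 1 ≤ 3 * β)
    (hA : ∀ ξ : ℝ, psiU μ ξ ≤ β * psiL μ ξ) : ComparableWith (3 * β) (psiL μ) (psiU μ) := by
  intro ξ
  have hL : 0 ≤ psiL μ ξ := ENNReal.toReal_nonneg
  constructor <;> nlinarith [psiL_le_psiU hμ ξ, hA ξ]

end LevyExponents

theorem rho_comparable_general (μ : Measure ℝ) (hμ : IsLevyMeasure μ)
    (β : ℝ) (hβ : 1 < β)
    (hA : ∀ ξ : ℝ, psiU μ ξ ≤ β * psiL μ ξ) :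
    ∀ c : ℝ, 0 < c → ∃ c₁ > (0 : ℝ), ∃ c₂ > (0 : ℝ), ∀ t ∈ Set.Ioc (0 : ℝ) 1,
      (c₁ * rho μ t ≤ rho μ (c * t) ∧ rho μ (c * t) ≤ c₂ * rho μ t) ∧
      (c₁ * rho μ t ≤ rhoU μ t ∧ rhoU μ t ≤ c₂ * rho μ t) ∧
      (c₁ * rho μ t ≤ rhoL μ t ∧ rhoL μ t ≤ c₂ * rho μ t) := by
  intro c hc
  set K := c + c⁻¹ + 1
  have hγ : 1 < 4 * β / (4 * β - 3) := by rw [one_lt_div (by linarith)]; linarith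
  obtain ⟨k, hk⟩ := pow_unbounded_of_one_lt ((3 * β) ^ 2 * K) hγ
  have key {f₁ f₂ : ℝ → ℝ} (hf₁ : ComparableWith (3 * β) f₁ (psiU μ))
      (hf₂ : ComparableWith (3 * β) f₂ (psiU μ)) {s₁ s₂ : ℝ} (hs₁ : 0 < s₁) (hs₂ : 0 < s₂)
      (hs : s₂ ≤ K * s₁) : quasiInverse f₂ s₂ ≤ 2 ^ k * quasiInverse f₁ s₁ :=
    quasiInverse_le_two_pow_mul hγ (psiU_reverse_doubling hμ (by linarith) hA) (by positivity)
      hf₁ hf₂ hs₁.le hs₂ hs hk.le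
  have hR := rePsi_comparableWith_psiU hμ (by linarith) hA
  have hL := psiL_comparableWith_psiU hμ (by linarith) hA
  have hU : ComparableWith (3 * β) (psiU μ) (psiU μ) :=
    comparableWith_self (by linarith) fun _ => ENNReal.toReal_nonneg
  refine ⟨(2 ^ k)⁻¹, by positivity, 2 ^ k, by positivity, fun t ⟨ht, _⟩ => ?_⟩
  simp only [inv_mul_le_iff₀ (by positivity : (0 : ℝ) < 2 ^ k)]
  have hct : 0 < 1 / (c * t) := by positivity
  have ht' : 0 < 1 / t := by positivity
  have hc' : 0 < c⁻¹ := inv_pos.mpr hc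
  have hs : 1 / t ≤ K * (1 / t) := le_mul_of_one_le_left ht'.le (by linarith)
  have hsc : 1 / (c * t) ≤ K * (1 / t) := by
    rw [← one_div_mul_one_div, one_div]; gcongr; linarith
  have hsc' : 1 / t ≤ K * (1 / (c * t)) := by
    rw [← mul_div_mul_left 1 t hc.ne', mul_one, div_eq_mul_one_div]; gcongr; linarith
  exact ⟨⟨key hR hR hct ht' hsc', key hR hR ht' hct hsc⟩, ⟨key hU hR ht' ht' hs,
    key hR hU ht' ht' hs⟩, ⟨key hL hR ht' ht' hs, key hR hL ht' ht' hs⟩⟩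

/-- Lemma 3.3: the quasi-inverses `ρ_{ct}`, `ρ_t^U`, `ρ_t^L` are all comparable to `ρ_t`,
uniformly in `t ∈ (0,1]`. -/
theorem rho_comparable (μ : Measure ℝ) (hμ : IsLevyMeasure μ)
    (hinf : μ Set.univ = ⊤) (β : ℝ) (hβ : 1 < β)
    (hA : ∀ ξ : ℝ, psiU μ ξ ≤ β * psiL μ ξ) :
    ∀ c : ℝ, 0 < c → ∃ c₁ > (0 : ℝ), ∃ c₂ > (0 : ℝ), ∀ t ∈ Set.Ioc (0 : ℝ) 1,
      (c₁ * rho μ t ≤ rho μ (c * t) ∧ rho μ (c * t) ≤ c₂ * rho μ t) ∧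
      (c₁ * rho μ t ≤ rhoU μ t ∧ rhoU μ t ≤ c₂ * rho μ t) ∧
      (c₁ * rho μ t ≤ rhoL μ t ∧ rhoL μ t ≤ c₂ * rho μ t) :=
  rho_comparable_general μ hμ β hβ hA
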